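/- Let R be a commutative ring, I an ideal of R, and M a finitely generated faithful multiplication R-module (i.e. M is finitely generated, has zero annihilator, and every submodule N of M satisfies N = (N : M)M). Let P be a proper submodule of M with I(P : M) = (IP : M). Then P is an I-primary submodule of M if and only if for all submodules N and K of M with NK ⊆ P and NK ⊄ IP (where NK denotes the product submodule (N : M)(K : M)M), one has N ⊆ P or K ⊆ √(P : M)M. -/

import Mathlib

/-- `P` is an `I`-primary submodule of `M`. -/
def IsIPrimary {R : Type*} [CommRing R] {M : Type*} [AddCommGroup M] [Module R M]
    (I : Ideal R) (P : Submodule R M) : Prop :=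
  P ≠ ⊤ ∧ ∀ r : R, ∀ m : M, r • m ∈ P → r • m ∉ I • P →
    m ∈ P ∨ r ∈ (P.colon ⊤).radical

/-- The product `N K` of two submodules of a multiplication module `M`,
defined as `(N : M)(K : M) M`. -/
def submoduleProd {R : Type*} [CommRing R] {M : Type*} [AddCommGroup M] [Module R M]
    (N K : Submodule R M) : Submodule R M :=
  (N.colon ⊤ * K.colon ⊤) • (⊤ : Submodule R M)

/-!
In a multiplication module `NK = (K : M) N`. If `P` is `I`-primary and `N ⊄ P`, fix `n₀ ∈ N \ P`;
an `s ∈ (K : M)` with `s • n ∉ IP` for some `n ∈ N` lies in `√(P : M)`, by applying the definition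
to `n`, `n₀` or `n₀ + n`, and an `s` with `s • n ∈ IP` is reduced to this case by adding a `t` with
`t • n ∉ IP`. Hence `K = (K : M) M ⊆ √(P : M) M`.

Conversely, `N = Rm` and `K = rM` have product `R(rm)`, and `rM ⊆ √(P : M) M` forces
`r ∈ √(P : M)` by the determinant trick, since `M` is finitely generated and faithful.
-/

open Polynomial in
theorem Polynomial.Monic.pow_natDegree_mem {R : Type*} [CommRing R] {J : Ideal R} {p : R[X]}
    (hp : p.Monic) (hcoeff : ∀ k < p.natDegree, p.coeff k ∈ J) {r : R} (hr : p.eval r = 0) :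
    r ^ p.natDegree ∈ J := by
  have hsum := p.eval_eq_sum_range r
  rw [Finset.sum_range_succ, hp.coeff_natDegree, one_mul, hr] at hsum
  rw [eq_neg_of_add_eq_zero_right hsum.symm]
  exact neg_mem <| Ideal.sum_mem _ fun k hk ↦
    Ideal.mul_mem_right _ _ (hcoeff k (Finset.mem_range.1 hk))

/- Cayley–Hamilton for the homothety `x ↦ r • x` gives a monic `p` with lower coefficients in `J`
and `p(r) • M = 0`; faithfulness turns this into `p(r) = 0`. -/
theorem Submodule.mem_radical_of_forall_smul_mem_smul_top {R : Type*} [CommRing R] {M : Type*}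
    [AddCommGroup M] [Module R M] [Module.Finite R M]
    (hfaithful : (⊤ : Submodule R M).annihilator = ⊥) {J : Ideal R} {r : R}
    (h : ∀ x : M, r • x ∈ J • (⊤ : Submodule R M)) : r ∈ J.radical := by
  obtain ⟨p, hp, -, hcoeff, hpr⟩ :=
    LinearMap.exists_monic_and_natDegree_eq_and_coeff_mem_pow_and_aeval_eq_zero R
      (algebraMap R (Module.End R M) r) J (by rintro _ ⟨x, rfl⟩; exact h x)
  have heval : p.eval r ∈ (⊤ : Submodule R M).annihilator := by
    refine Submodule.mem_annihilator.2 fun x _ ↦ ?_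
    simpa [Polynomial.aeval_algebraMap_apply_eq_algebraMap_eval] using
      LinearMap.congr_fun hpr x
  rw [hfaithful, Submodule.mem_bot] at heval
  exact ⟨p.natDegree, hp.pow_natDegree_mem (fun k hk ↦
    Ideal.pow_le_self (Nat.sub_ne_zero_of_lt hk) (hcoeff k)) heval⟩

section IsIPrimary

variable {R : Type*} [CommRing R] {M : Type*} [AddCommGroup M] [Module R M]
  {I : Ideal R} {P : Submodule R M}

theorem IsIPrimary.mem_radical (hP : IsIPrimary I P) {r : R} {m : M} (hrm : r • m ∈ P)
    (hrm' : r • m ∉ I • P) (hm : m ∉ P) : r ∈ (P.colon ⊤).radical :=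
  (hP.2 r m hrm hrm').resolve_left hm

theorem IsIPrimary.mem_radical_of_forall_smul_mem (hP : IsIPrimary I P) {N : Submodule R M}
    {s : R} (hsN : ∀ n ∈ N, s • n ∈ P) {n₀ n : M} (hn₀ : n₀ ∈ N) (hn₀P : n₀ ∉ P) (hn : n ∈ N)
    (hsn : s • n ∉ I • P) : s ∈ (P.colon ⊤).radical := by
  by_cases hnP : n ∈ P
  swap
  · exact hP.mem_radical (hsN n hn) hsn hnP
  by_cases hsn₀ : s • n₀ ∈ I • P
  swap
  · exact hP.mem_radical (hsN n₀ hn₀) hsn₀ hn₀P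
  refine hP.mem_radical (hsN _ (N.add_mem hn₀ hn)) ?_ ?_
  · rwa [smul_add, (I • P).add_mem_iff_right hsn₀]
  · rwa [P.add_mem_iff_left hnP]

theorem IsIPrimary.le_radical_of_smul_le (hP : IsIPrimary I P) {J : Ideal R}
    {N : Submodule R M} (hJN : J • N ≤ P) (hJN' : ¬J • N ≤ I • P) (hN : ¬N ≤ P) :
    J ≤ (P.colon ⊤).radical := by
  obtain ⟨n₀, hn₀, hn₀P⟩ := SetLike.not_le_iff_exists.1 hN
  obtain ⟨t, ht, n, hn, htn⟩ : ∃ t ∈ J, ∃ n ∈ N, t • n ∉ I • P := by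
    by_contra! h
    exact hJN' (Submodule.smul_le.2 h)
  have hrad : ∀ s ∈ J, s • n ∉ I • P → s ∈ (P.colon ⊤).radical := fun s hs ↦
    hP.mem_radical_of_forall_smul_mem (fun n hn ↦ hJN (Submodule.smul_mem_smul hs hn))
      hn₀ hn₀P hn
  intro s hs
  by_cases hsn : s • n ∈ I • P
  swap
  · exact hrad s hs hsn
  have hst : s + t ∈ (P.colon ⊤).radical :=
    hrad _ (J.add_mem hs ht) (by rwa [add_smul, (I • P).add_mem_iff_right hsn])
  rwa [Ideal.add_mem_iff_left _ (hrad t ht htn)] at hst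

end IsIPrimary

section MultiplicationModule

variable {R : Type*} [CommRing R] {M : Type*} [AddCommGroup M] [Module R M]

theorem submoduleProd_eq_colon_smul {N : Submodule R M} (hN : N.colon ⊤ • ⊤ = N)
    (K : Submodule R M) : submoduleProd N K = K.colon ⊤ • N := by
  rw [submoduleProd, mul_comm, Submodule.mul_smul, hN]

theorem submoduleProd_smul_top {N : Submodule R M} (hN : N.colon ⊤ • ⊤ = N) {J : Ideal R}
    (hJ : (J • ⊤ : Submodule R M).colon ⊤ • ⊤ = J • (⊤ : Submodule R M)) :
    submoduleProd N (J • ⊤) = J • N := by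
  rw [submoduleProd, Submodule.mul_smul, hJ, ← Submodule.mul_smul, mul_comm,
    Submodule.mul_smul, hN]

variable {I : Ideal R} {P : Submodule R M}

theorem IsIPrimary.le_or_le_radical_smul_top (hP : IsIPrimary I P) {N K : Submodule R M}
    (hN : N.colon ⊤ • ⊤ = N) (hK : K.colon ⊤ • ⊤ = K) (hNK : submoduleProd N K ≤ P)
    (hNK' : ¬submoduleProd N K ≤ I • P) :
    N ≤ P ∨ K ≤ (P.colon ⊤).radical • (⊤ : Submodule R M) := by
  rw [submoduleProd_eq_colon_smul hN] at hNK hNK'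
  refine or_iff_not_imp_left.2 fun hNP ↦ ?_
  rw [← hK]
  exact Submodule.smul_mono_left (hP.le_radical_of_smul_le hNK hNK' hNP)

theorem isIPrimary_of_forall_submoduleProd [Module.Finite R M]
    (hfaithful : (⊤ : Submodule R M).annihilator = ⊥)
    (hmult : ∀ N : Submodule R M, N.colon ⊤ • (⊤ : Submodule R M) = N) (hproper : P ≠ ⊤)
    (h : ∀ N K : Submodule R M, submoduleProd N K ≤ P → ¬submoduleProd N K ≤ I • P →
      N ≤ P ∨ K ≤ (P.colon ⊤).radical • (⊤ : Submodule R M)) :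
    IsIPrimary I P := by
  refine ⟨hproper, fun r m hrm hrm' ↦ ?_⟩
  have hprod : submoduleProd (R ∙ m) (Ideal.span {r} • ⊤) = R ∙ r • m := by
    rw [submoduleProd_smul_top (hmult _) (hmult _), Submodule.span_smul_span,
      Set.singleton_smul_singleton]
  rw [← Submodule.span_singleton_le_iff_mem, ← hprod] at hrm hrm'
  refine (h _ _ hrm hrm').imp (fun hmP ↦ hmP (Submodule.mem_span_singleton_self m)) ?_
  intro hrad
  rw [← Ideal.radical_idem]
  exact Submodule.mem_radical_of_forall_smul_mem_smul_top hfaithful fun x ↦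
    hrad (Submodule.smul_mem_smul (Ideal.mem_span_singleton_self r) trivial)

end MultiplicationModule

theorem stmt12_general {R : Type*} [CommRing R] {M : Type*} [AddCommGroup M] [Module R M]
    (I : Ideal R) (P : Submodule R M)
    (hfg : Module.Finite R M)
    (hfaithful : (⊤ : Submodule R M).annihilator = ⊥)
    (hmult : ∀ N : Submodule R M, (N.colon ⊤) • (⊤ : Submodule R M) = N)
    (hproper : P ≠ ⊤) :
    IsIPrimary I P ↔
      ∀ N K : Submodule R M, submoduleProd N K ≤ P → ¬ (submoduleProd N K ≤ I • P) →
        N ≤ P ∨ K ≤ (P.colon ⊤).radical • (⊤ : Submodule R M) :=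
  ⟨fun hP _ _ ↦ hP.le_or_le_radical_smul_top (hmult _) (hmult _),
    isIPrimary_of_forall_submoduleProd hfaithful hmult hproper⟩

theorem stmt12 {R : Type*} [CommRing R] {M : Type*} [AddCommGroup M] [Module R M]
    (I : Ideal R) (P : Submodule R M)
    (hfg : Module.Finite R M)
    (hfaithful : (⊤ : Submodule R M).annihilator = ⊥)
    (hmult : ∀ N : Submodule R M, (N.colon ⊤) • (⊤ : Submodule R M) = N)
    (hproper : P ≠ ⊤)
    (hIP : I * (P.colon ⊤) = (I • P).colon ⊤) :
    IsIPrimary I P ↔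
      ∀ N K : Submodule R M, submoduleProd N K ≤ P → ¬ (submoduleProd N K ≤ I • P) →
        N ≤ P ∨ K ≤ (P.colon ⊤).radical • (⊤ : Submodule R M) :=
  stmt12_general I P hfg hfaithful hmult hproper
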